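/- Let n1, n2 > 0 be real weights, let a1, a2 ∈ [0, 1] with a1 ≠ a2 be the training means of the two arms, set p = (n1·a1 + n2·a2)/(n1 + n2), and assume p ∈ (0, 1). Let ν1, ν2 ∈ [0, 1] with ν1 ≠ ν2 be the validation means, and define L(δ) = (1/(n1 + n2)) · [ n1·ℓ(ν1, p + δ) + n2·ℓ(ν2, p − (n1/n2)·δ) ]. Then there exists η0 > 0 such that for all learning rates η ∈ (0, η0): L(η·(a1 − p)) < L(0) if and only if (a1 − a2)·(ν1 − ν2) > 0. That is, for sufficiently small learning rate, the updated ensemble Tree_0 + η·Tree_1 strictly reduces the validation log loss exactly when the training difference Δ_tr = a1 − a2 and the validation difference Δ_val = ν1 − ν2 agree in sign. -/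

import Mathlib

/-- The binary-outcome log loss of a constant prediction `p ∈ (0,1)`
against a target mean `ν ∈ [0,1]`. -/
noncomputable def logLoss (ν p : ℝ) : ℝ :=
  -ν * Real.log p - (1 - ν) * Real.log (1 - p)

/-!
Along the boosting direction, `η ↦ L (η * (a1 - p))` has derivative at `0` equal to
`-(a1 - a2) * (ν1 - ν2) * n1 * n2 / ((n1 + n2)² p (1 - p))`: the training means enter only
through `a1 - p = n2 (a1 - a2) / (n1 + n2)`, the validation means through
`(logLoss ν)' p = (p - ν) / (p (1 - p))`. This derivative is nonzero, so for small `η > 0`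
the loss moves strictly in the direction of its sign.
-/

open Filter Topology

lemma HasDerivAt.eventually_lt_iff_neg {g : ℝ → ℝ} {K x : ℝ} (hg : HasDerivAt g K x)
    (hK : K ≠ 0) : ∀ᶠ t in 𝓝[>] 0, (g (x + t) < g x ↔ K < 0) := by
  have hslope : ∀ᶠ t in 𝓝[>] (0 : ℝ), (t⁻¹ • (g (x + t) - g x) < 0 ↔ K < 0) := by
    rcases hK.lt_or_gt with hK | hK
    · filter_upwards [hg.tendsto_slope_zero_right.eventually (gt_mem_nhds hK)] with t ht
      exact iff_of_true ht hK
    · filter_upwards [hg.tendsto_slope_zero_right.eventually (lt_mem_nhds hK)] with t ht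
      exact iff_of_false (lt_asymm ht) (lt_asymm hK)
  filter_upwards [hslope, self_mem_nhdsWithin] with t ht (htpos : 0 < t)
  rw [← ht, smul_neg_iff_of_pos_left (inv_pos.2 htpos), sub_neg]

lemma hasDerivAt_logLoss (ν : ℝ) {p : ℝ} (hp₀ : p ≠ 0) (hp₁ : p ≠ 1) :
    HasDerivAt (logLoss ν) ((p - ν) / (p * (1 - p))) p := by
  have hq : 1 - p ≠ 0 := sub_ne_zero.2 hp₁.symm
  refine (((Real.hasDerivAt_log hp₀).const_mul (-ν)).sub
    ((((hasDerivAt_id' p).const_sub 1).log hq).const_mul (1 - ν))).congr_deriv ?_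
  field_simp
  ring

lemma hasDerivAt_twoArmLoss {n₁ n₂ ν₁ ν₂ p : ℝ} (hn₂ : n₂ ≠ 0) (hp₀ : p ≠ 0) (hp₁ : p ≠ 1) :
    HasDerivAt (fun δ ↦ 1 / (n₁ + n₂) *
        (n₁ * logLoss ν₁ (p + δ) + n₂ * logLoss ν₂ (p - n₁ / n₂ * δ)))
      (n₁ * (ν₂ - ν₁) / ((n₁ + n₂) * (p * (1 - p)))) 0 := by
  have h₁ := (hasDerivAt_logLoss ν₁ hp₀ hp₁).comp_of_eq 0
    ((hasDerivAt_id' 0).const_add p) (add_zero p).symm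
  have h₂ := (hasDerivAt_logLoss ν₂ hp₀ hp₁).comp_of_eq 0
    (((hasDerivAt_id' 0).const_mul (n₁ / n₂)).const_sub p) (by simp)
  refine (((h₁.const_mul n₁).add (h₂.const_mul n₂)).const_mul (1 / (n₁ + n₂))).congr_deriv ?_
  field_simp
  ring

theorem tree1_accepted_iff_sign_agreement_general
    (n1 n2 a1 a2 ν1 ν2 : ℝ) (hn1 : 0 < n1) (hn2 : 0 < n2)
    (hane : a1 ≠ a2) (hνne : ν1 ≠ ν2)
    (p : ℝ) (hpdef : p = (n1 * a1 + n2 * a2) / (n1 + n2)) (hp : p ∈ Set.Ioo (0 : ℝ) 1)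
    (L : ℝ → ℝ)
    (hL : ∀ δ : ℝ, L δ = (1 / (n1 + n2)) *
      (n1 * logLoss ν1 (p + δ) + n2 * logLoss ν2 (p - (n1 / n2) * δ))) :
    ∃ η0 > (0 : ℝ), ∀ η ∈ Set.Ioo (0 : ℝ) η0,
      (L (η * (a1 - p)) < L 0 ↔ (a1 - a2) * (ν1 - ν2) > 0) := by
  obtain ⟨hp₀, hp₁⟩ := hp
  have hL' : HasDerivAt L (n1 * (ν2 - ν1) / ((n1 + n2) * (p * (1 - p)))) 0 :=
    funext hL ▸ hasDerivAt_twoArmLoss hn2.ne' hp₀.ne' hp₁.ne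
  have hderiv := hL'.comp_of_eq 0 ((hasDerivAt_id' 0).mul_const (a1 - p)) (zero_mul _).symm
  have hrate : n1 * (ν2 - ν1) / ((n1 + n2) * (p * (1 - p))) * (1 * (a1 - p)) =
      -((a1 - a2) * (ν1 - ν2)) * (n1 * n2 / ((n1 + n2) ^ 2 * (p * (1 - p)))) := by
    rw [hpdef]
    field_simp
    ring
  have hpos : 0 < n1 * n2 / ((n1 + n2) ^ 2 * (p * (1 - p))) := by
    have : 0 < 1 - p := sub_pos.2 hp₁
    positivity
  have hne : (a1 - a2) * (ν1 - ν2) ≠ 0 := mul_ne_zero (sub_ne_zero.2 hane) (sub_ne_zero.2 hνne)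
  rw [hrate] at hderiv
  obtain ⟨η0, hη0, hsub⟩ := mem_nhdsGT_iff_exists_Ioo_subset.1
    (hderiv.eventually_lt_iff_neg (mul_ne_zero (neg_ne_zero.2 hne) hpos.ne'))
  refine ⟨η0, hη0, fun η hη ↦ ?_⟩
  simpa [neg_mul, mul_pos_iff_of_pos_right hpos] using hsub hη

/-- For sufficiently small learning rate `η`, adding `Tree_1` (shifting the arm-1
prediction by `η·(a1 − p)`) strictly reduces the validation log loss if and only if
the training difference `a1 − a2` and the validation difference `ν1 − ν2` agree in sign. -/
theorem tree1_accepted_iff_sign_agreement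
    (n1 n2 a1 a2 ν1 ν2 : ℝ) (hn1 : 0 < n1) (hn2 : 0 < n2)
    (ha1 : a1 ∈ Set.Icc (0 : ℝ) 1) (ha2 : a2 ∈ Set.Icc (0 : ℝ) 1) (hane : a1 ≠ a2)
    (hν1 : ν1 ∈ Set.Icc (0 : ℝ) 1) (hν2 : ν2 ∈ Set.Icc (0 : ℝ) 1) (hνne : ν1 ≠ ν2)
    (p : ℝ) (hpdef : p = (n1 * a1 + n2 * a2) / (n1 + n2)) (hp : p ∈ Set.Ioo (0 : ℝ) 1)
    (L : ℝ → ℝ)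
    (hL : ∀ δ : ℝ, L δ = (1 / (n1 + n2)) *
      (n1 * logLoss ν1 (p + δ) + n2 * logLoss ν2 (p - (n1 / n2) * δ))) :
    ∃ η0 > (0 : ℝ), ∀ η ∈ Set.Ioo (0 : ℝ) η0,
      (L (η * (a1 - p)) < L 0 ↔ (a1 - a2) * (ν1 - ν2) > 0) :=
  tree1_accepted_iff_sign_agreement_general n1 n2 a1 a2 ν1 ν2 hn1 hn2 hane hνne p hpdef hp L hL
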